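/- Let γ > 0, b > 0, and let β solve β'(t) = (2/(3t)) β(t) − (8b/3) t β(t)^{γ/2+1} on [t₀,∞) with β(t₀) > 0 (the case μ(t) = 1/t). Then t^{4/γ} β(t) → (4γb/(γ+6))^{-2/γ} as t → ∞. -/

import Mathlib

/-!
The Bernoulli substitution `u = β^(-γ/2)` turns the equation into the linear one
`u' = -(γ/(3t)) u + (4γb/3) t`, which has the first integral `t^(γ/3) u - K t^(γ/3+2)` with
`K = 4γb/(γ+6)`. Wherever `β > 0` this gives the closed form
`t^(4/γ) β(t) = (K + C t^(-(γ/3+2)))^(-2/γ)`, whose right side stays positive on `[t₀, ∞)`.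
Since `β^(-γ/2)` is meaningless once `β` reaches `0`, the continuous induction runs over the
closed set where `t^(4/γ) β` agrees with the closed form, not over the set where `β > 0`;
it shows that the closed form holds on all of `[t₀, ∞)`, and letting `t → ∞` gives `K^(-2/γ)`.
-/

open Filter Real Set Topology

noncomputable def shearField (γ b t y : ℝ) : ℝ :=
  (2 / (3 * t)) * y - (8 * b / 3) * t * y ^ (γ / 2 + 1)

noncomputable def shearFirstIntegral (γ K : ℝ) (β : ℝ → ℝ) (t : ℝ) : ℝ :=
  t ^ (γ / 3) * β t ^ (-(γ / 2)) - K * t ^ (γ / 3 + 2)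

noncomputable def shearProfile (γ K C t : ℝ) : ℝ :=
  (K + C * t ^ (-(γ / 3 + 2))) ^ (-(2 / γ))

section

variable {γ b K C t : ℝ} {β : ℝ → ℝ}

theorem hasDerivAt_rpow_neg_half_of_shearField (ht : 0 < t) (hβt : 0 < β t)
    (hd : HasDerivAt β (shearField γ b t (β t)) t) :
    HasDerivAt (fun s => β s ^ (-(γ / 2)))
      (-(γ / (3 * t)) * β t ^ (-(γ / 2)) + (4 * γ * b / 3) * t) t := by
  convert hd.rpow_const (p := -(γ / 2)) (Or.inl hβt.ne') using 1
  have hβ_pow : β t ^ (-(γ / 2) - 1) * β t = β t ^ (-(γ / 2)) := by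
    rw [← rpow_add_one hβt.ne', sub_add_cancel]
  have hβ_inv : β t ^ (-(γ / 2) - 1) * β t ^ (γ / 2 + 1) = 1 := by
    rw [← rpow_add hβt]; norm_num
  unfold shearField
  field_simp
  rw [← hβ_pow]
  linear_combination (norm := ring_nf) (-8 * γ * b * t ^ 2) * hβ_inv

theorem hasDerivAt_shearFirstIntegral (hγ : γ + 6 ≠ 0) (ht : 0 < t) (hβt : 0 < β t)
    (hd : HasDerivAt β (shearField γ b t (β t)) t) :
    HasDerivAt (shearFirstIntegral γ (4 * γ * b / (γ + 6)) β) 0 t := by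
  have h₁ : HasDerivAt (fun s : ℝ => s ^ (γ / 3)) (γ / 3 * t ^ (γ / 3 - 1)) t :=
    hasDerivAt_rpow_const (Or.inl ht.ne')
  have h₂ : HasDerivAt (fun s : ℝ => s ^ (γ / 3 + 2)) ((γ / 3 + 2) * t ^ (γ / 3 + 2 - 1)) t :=
    hasDerivAt_rpow_const (Or.inl ht.ne')
  refine ((h₁.mul (hasDerivAt_rpow_neg_half_of_shearField ht hβt hd)).sub
    (h₂.const_mul (4 * γ * b / (γ + 6)))).congr_deriv ?_
  have e₁ : t ^ (γ / 3 - 1) * t = t ^ (γ / 3) := by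
    rw [← rpow_add_one ht.ne', sub_add_cancel]
  have e₂ : t ^ (γ / 3 + 2 - 1) = t ^ (γ / 3) * t := by
    rw [← rpow_add_one ht.ne']; ring_nf
  rw [e₂, ← e₁]
  field_simp
  ring

theorem rpow_mul_rpow_neg_half (hγ : γ ≠ 0) (ht : 0 < t) (hβt : 0 < β t) :
    (t ^ (4 / γ) * β t) ^ (-(γ / 2)) = K + shearFirstIntegral γ K β t * t ^ (-(γ / 3 + 2)) := by
  have h : t ^ (γ / 3 + 2) * t ^ (-(γ / 3 + 2)) = 1 := by
    rw [← rpow_add ht, add_neg_cancel, rpow_zero]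
  rw [mul_rpow (by positivity) hβt.le, ← rpow_mul ht.le,
    show 4 / γ * -(γ / 2) = γ / 3 + -(γ / 3 + 2) by field_simp; ring, rpow_add ht]
  unfold shearFirstIntegral
  linear_combination K * h

theorem rpow_mul_eq_shearProfile_iff (hγ : γ ≠ 0) (ht : 0 < t) (hβt : 0 < β t)
    (hpos : 0 < K + C * t ^ (-(γ / 3 + 2))) :
    t ^ (4 / γ) * β t = shearProfile γ K C t ↔ shearFirstIntegral γ K β t = C := by
  have hinv : -(2 / γ) = (-(γ / 2))⁻¹ := by rw [inv_neg, inv_div]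
  rw [shearProfile, hinv, eq_comm, rpow_inv_eq hpos.le (by positivity) (by simpa using hγ),
    rpow_mul_rpow_neg_half hγ ht hβt, add_right_inj,
    mul_left_inj' (rpow_pos_of_pos ht _).ne', eq_comm]

theorem shearProfile_base_pos {t₀ : ℝ} (hγ : 0 ≤ γ / 3 + 2) (hK : 0 ≤ K) (ht₀ : 0 < t₀)
    (ht : t₀ ≤ t) (hβ₀ : 0 < β t₀) :
    0 < K + shearFirstIntegral γ K β t₀ * t ^ (-(γ / 3 + 2)) := by
  have htpos : 0 < t := ht₀.trans_le ht
  have h : t ^ (γ / 3 + 2) * t ^ (-(γ / 3 + 2)) = 1 := by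
    rw [← rpow_add htpos, add_neg_cancel, rpow_zero]
  have hmono : t₀ ^ (γ / 3 + 2) ≤ t ^ (γ / 3 + 2) := rpow_le_rpow ht₀.le ht hγ
  have hF₀ : 0 < t₀ ^ (γ / 3) * β t₀ ^ (-(γ / 2)) := by positivity
  have : 0 < K * t ^ (γ / 3 + 2) + shearFirstIntegral γ K β t₀ := by
    unfold shearFirstIntegral; nlinarith
  calc 0 < (K * t ^ (γ / 3 + 2) + shearFirstIntegral γ K β t₀) * t ^ (-(γ / 3 + 2)) := by
        positivity
    _ = _ := by linear_combination K * h

theorem continuousAt_shearProfile (ht : 0 < t) (hpos : K + C * t ^ (-(γ / 3 + 2)) ≠ 0) :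
    ContinuousAt (shearProfile γ K C) t :=
  ((continuousAt_const.add (continuousAt_const.mul
    (continuousAt_rpow_const t _ (Or.inl ht.ne'))))).rpow_const (Or.inl hpos)

theorem tendsto_shearProfile (hγ : 0 < γ / 3 + 2) (hK : K ≠ 0) :
    Tendsto (shearProfile γ K C) atTop (𝓝 (K ^ (-(2 / γ)))) := by
  have h : Tendsto (fun t : ℝ => K + C * t ^ (-(γ / 3 + 2))) atTop (𝓝 K) := by
    simpa using ((tendsto_rpow_neg_atTop hγ).const_mul C).const_add K
  exact (continuousAt_rpow_const K _ (Or.inl hK)).tendsto.comp h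


theorem eventually_shearFirstIntegral_eq {t₀ x : ℝ} (hγ : γ + 6 ≠ 0) (ht₀ : 0 < t₀)
    (hβ : ∀ t, t₀ ≤ t → HasDerivAt β (shearField γ b t (β t)) t) (hx : t₀ ≤ x)
    (hβx : 0 < β x) :
    ∀ᶠ y in 𝓝[≥] x, 0 < β y ∧ shearFirstIntegral γ (4 * γ * b / (γ + 6)) β y =
      shearFirstIntegral γ (4 * γ * b / (γ + 6)) β x := by
  obtain ⟨c, hxc, hpos⟩ := mem_nhdsGE_iff_exists_Ico_subset.mp <|
    nhdsWithin_le_nhds ((hβ x hx).continuousAt.eventually (lt_mem_nhds hβx))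
  have hF : ∀ s ∈ Ico x c,
      HasDerivAt (shearFirstIntegral γ (4 * γ * b / (γ + 6)) β) 0 s := fun s hs =>
    hasDerivAt_shearFirstIntegral hγ (ht₀.trans_le (hx.trans hs.1)) (hpos hs) (hβ s (hx.trans hs.1))
  filter_upwards [Ico_mem_nhdsGE hxc] with y hy
  refine ⟨hpos hy, constant_of_has_deriv_right_zero (fun s hs => ?_) (fun s hs => ?_) y
    (right_mem_Icc.mpr hy.1)⟩
  · exact (hF s ⟨hs.1, hs.2.trans_lt hy.2⟩).continuousAt.continuousWithinAt
  · exact (hF s ⟨hs.1, hs.2.trans hy.2⟩).hasDerivWithinAt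

theorem rpow_mul_eq_shearProfile {t₀ : ℝ} (hγ : 0 < γ) (hb : 0 ≤ b) (ht₀ : 0 < t₀)
    (hβ₀ : 0 < β t₀) (hβ : ∀ t, t₀ ≤ t → HasDerivAt β (shearField γ b t (β t)) t)
    (ht : t₀ ≤ t) :
    t ^ (4 / γ) * β t = shearProfile γ (4 * γ * b / (γ + 6))
      (shearFirstIntegral γ (4 * γ * b / (γ + 6)) β t₀) t := by
  set K := 4 * γ * b / (γ + 6)
  set C := shearFirstIntegral γ K β t₀
  have hbase : ∀ x, t₀ ≤ x → 0 < K + C * x ^ (-(γ / 3 + 2)) := fun x hx =>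
    shearProfile_base_pos (by positivity) (by positivity) ht₀ hx hβ₀
  let S := {x | x ^ (4 / γ) * β x = shearProfile γ K C x}
  have hclosed : IsClosed (S ∩ Icc t₀ t) := by
    rw [inter_comm]
    refine isClosed_Icc.isClosed_eq (fun x hx => ?_) (fun x hx => ?_)
    · exact ((continuousAt_rpow_const x _ (Or.inl (ht₀.trans_le hx.1).ne')).mul
        (hβ x hx.1).continuousAt).continuousWithinAt
    · exact (continuousAt_shearProfile (ht₀.trans_le hx.1) (hbase x hx.1).ne').continuousWithinAt
  have hS : ∀ x, t₀ ≤ x → 0 < β x → (x ∈ S ↔ shearFirstIntegral γ K β x = C) := fun x hx hβx =>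
    rpow_mul_eq_shearProfile_iff hγ.ne' (ht₀.trans_le hx) hβx (hbase x hx)
  refine hclosed.Icc_subset_of_forall_mem_nhdsWithin ((hS t₀ le_rfl hβ₀).mpr rfl)
    (fun x ⟨hxS, hx, _⟩ => ?_) ⟨ht, le_rfl⟩
  have hxpos : 0 < x := ht₀.trans_le hx
  have hβx : 0 < β x := by
    have : 0 < x ^ (4 / γ) * β x := hxS.symm ▸ rpow_pos_of_pos (hbase x hx) _
    exact pos_of_mul_pos_right this (rpow_pos_of_pos hxpos _).le
  filter_upwards [nhdsWithin_mono x Ioi_subset_Ici_self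
    (eventually_shearFirstIntegral_eq (by positivity) ht₀ hβ hx hβx),
    self_mem_nhdsWithin] with y ⟨hβy, hFy⟩ (hxy : x < y)
  exact (hS y (hx.trans hxy.le) hβy).mpr (hFy.trans ((hS x hx hβx).mp hxS))

end

/-- if `β' = (2/(3t)) β − (8b/3) t β^{γ/2+1}` on `[t₀,∞)` with `β(t₀) > 0`,
then `t^{4/γ} β(t) → (4γb/(γ+6))^{−2/γ}` as `t → ∞`. -/
theorem stmt_13 (γ b t₀ : ℝ) (hγ : 0 < γ) (hb : 0 < b) (ht₀ : 0 < t₀)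
    (β : ℝ → ℝ) (hβ₀ : 0 < β t₀)
    (hβ : ∀ t, t₀ ≤ t →
      HasDerivAt β ((2 / (3 * t)) * β t - (8 * b / 3) * t * β t ^ (γ / 2 + 1)) t) :
    Tendsto (fun t : ℝ => t ^ ((4:ℝ) / γ) * β t) atTop
      (nhds ((4 * γ * b / (γ + 6)) ^ (-(2 / γ)))) := by
  refine (tendsto_shearProfile (C := shearFirstIntegral γ (4 * γ * b / (γ + 6)) β t₀)
    (by positivity) (by positivity)).congr' ?_
  filter_upwards [eventually_ge_atTop t₀] with t ht
  exact (rpow_mul_eq_shearProfile hγ hb.le ht₀ hβ₀ hβ ht).symm
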